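/- arXiv:2501.00643 — 2 statements merged into one kernel-verified Lean document; each statement's English description precedes it below -/
import Mathlib

section
/- Discrete adjoint sensitivity theorem (Equation 25): assume the linearized discrete equations of motion hold, namely (H1) b_0 + A_0⁰ u_0 + A_0⁺ u_1 + Λ_0 v_0 + D_0 w = 0, (H2) b_n + A_n⁻ u_{n−1} + A_n⁰ u_n + A_n⁺ u_{n+1} + Λ_n v_n = 0 for n = 1,…,N−1, and (H3) h_n + G_n u_n = 0 for n = 1,…,N. Assume the adjoint vectors μ_0,…,μ_{N−1} ∈ ℝ^m and η_1,…,η_N ∈ ℝ^l satisfy the discrete adjoint equations: (A1) (A_{N−1}⁺)ᵀ μ_{N−1} + G_Nᵀ η_N = p_N, (A2) (A_{N−2}⁺)ᵀ μ_{N−2} + G_{N−1}ᵀ η_{N−1} = p_{N−1} − (A_{N−1}⁰)ᵀ μ_{N−1}, (A3) (A_{n−1}⁺)ᵀ μ_{n−1} + G_nᵀ η_n = p_n − (A_{n+1}⁻)ᵀ μ_{n+1} − (A_n⁰)ᵀ μ_n for n = 1,…,N−2, and (A4) Λ_nᵀ μ_n = σ_n for n = 0,…,N−1. Then the total sensitivity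 satisfies s + r·w + Σ_{n=0}^{N} p_n·u_n + Σ_{n=0}^{N−1} σ_n·v_n = s − Σ_{n=0}^{N−1} μ_n·b_n − Σ_{n=1}^{N} η_n·h_n + (p_0 − (A_1⁻)ᵀ μ_1 − (A_0⁰)ᵀ μ_0)·u_0 + (r − D_0ᵀ μ_0)·w; in particular the total derivative of the objective is computed without any of the state or multiplier sensitivities u_n (n ≥ 1) and v_n. -/
open Matrix Finset

private lemma tdot {m l : ℕ} (A : Matrix (Fin m) (Fin l) ℝ) (x : Fin m → ℝ) (y : Fin l → ℝ) :
    (Aᵀ *ᵥ x) ⬝ᵥ y = x ⬝ᵥ (A *ᵥ y) := by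
  rw [Matrix.mulVec_transpose, ← Matrix.dotProduct_mulVec]

/-- Discrete adjoint sensitivity theorem (Equation 25): if the linearized discrete
equations of motion and the discrete adjoint equations hold, the total sensitivity
is computed without the state/multiplier sensitivities `u n` (n ≥ 1) and `v n`. -/
theorem discrete_adjoint_sensitivity (m l N : ℕ) (hN : 3 ≤ N)
    (u : ℕ → Fin m → ℝ) (v : ℕ → Fin l → ℝ) (w : Fin m → ℝ)
    (s : ℝ) (p : ℕ → Fin m → ℝ) (σ : ℕ → Fin l → ℝ) (r : Fin m → ℝ)
    (Aminus A0 Aplus : ℕ → Matrix (Fin m) (Fin m) ℝ) (D0 : Matrix (Fin m) (Fin m) ℝ)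
    (Λ : ℕ → Matrix (Fin m) (Fin l) ℝ)
    (G : ℕ → Matrix (Fin l) (Fin m) ℝ)
    (b : ℕ → Fin m → ℝ) (h : ℕ → Fin l → ℝ)
    (μ : ℕ → Fin m → ℝ) (η : ℕ → Fin l → ℝ)
    (H1 : b 0 + A0 0 *ᵥ u 0 + Aplus 0 *ᵥ u 1 + Λ 0 *ᵥ v 0 + D0 *ᵥ w = 0)
    (H2 : ∀ n, 1 ≤ n → n ≤ N - 1 →
      b n + Aminus n *ᵥ u (n - 1) + A0 n *ᵥ u n + Aplus n *ᵥ u (n + 1) + Λ n *ᵥ v n = 0)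
    (H3 : ∀ n, 1 ≤ n → n ≤ N → h n + G n *ᵥ u n = 0)
    (A1 : (Aplus (N - 1))ᵀ *ᵥ μ (N - 1) + (G N)ᵀ *ᵥ η N = p N)
    (A2 : (Aplus (N - 2))ᵀ *ᵥ μ (N - 2) + (G (N - 1))ᵀ *ᵥ η (N - 1)
            = p (N - 1) - (A0 (N - 1))ᵀ *ᵥ μ (N - 1))
    (A3 : ∀ n, 1 ≤ n → n ≤ N - 2 →
      (Aplus (n - 1))ᵀ *ᵥ μ (n - 1) + (G n)ᵀ *ᵥ η n
        = p n - (Aminus (n + 1))ᵀ *ᵥ μ (n + 1) - (A0 n)ᵀ *ᵥ μ n)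
    (A4 : ∀ n, n ≤ N - 1 → (Λ n)ᵀ *ᵥ μ n = σ n) :
    s + r ⬝ᵥ w + ∑ n ∈ range (N + 1), p n ⬝ᵥ u n + ∑ n ∈ range N, σ n ⬝ᵥ v n
    =
    s - ∑ n ∈ range N, μ n ⬝ᵥ b n - ∑ n ∈ Icc 1 N, η n ⬝ᵥ h n
      + (p 0 - (Aminus 1)ᵀ *ᵥ μ 1 - (A0 0)ᵀ *ᵥ μ 0) ⬝ᵥ u 0
      + (r - D0ᵀ *ᵥ μ 0) ⬝ᵥ w := by
  obtain ⟨K, rfl⟩ : ∃ K, N = K + 3 := ⟨N - 3, by omega⟩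
  -- closed forms
  set SX : ℝ := ∑ n ∈ range (K+3), μ n ⬝ᵥ (Aplus n *ᵥ u (n+1)) with hSX
  set SY : ℝ := ∑ n ∈ range (K+3), η (n+1) ⬝ᵥ (G (n+1) *ᵥ u (n+1)) with hSY
  set SZ : ℝ := ∑ n ∈ range (K+1), μ (n+1+1) ⬝ᵥ (Aminus (n+1+1) *ᵥ u (n+1)) with hSZ
  set SW : ℝ := ∑ n ∈ range (K+2), μ (n+1) ⬝ᵥ (A0 (n+1) *ᵥ u (n+1)) with hSW
  set SV : ℝ := ∑ n ∈ range (K+3), μ n ⬝ᵥ (Λ n *ᵥ v n) with hSV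
  -- HT2
  have HT2 : ∑ n ∈ range (K+3), σ n ⬝ᵥ v n = SV := by
    rw [hSV]
    refine Finset.sum_congr rfl fun n hn => ?_
    rw [← A4 n (by simp only [mem_range] at hn; omega), tdot]
  -- HT4
  have HT4 : ∑ n ∈ Icc 1 (K+3), η n ⬝ᵥ h n = -SY := by
    rw [hSY, ← Finset.Ico_add_one_right_eq_Icc, Finset.sum_Ico_eq_sum_range, ← Finset.sum_neg_distrib]
    refine Finset.sum_congr (by norm_num) fun n hn => ?_
    have h3 := H3 (1+n) (by omega) (by simp only [mem_range] at hn; omega)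
    have hh : h (1+n) = -(G (1+n) *ᵥ u (1+n)) := eq_neg_of_add_eq_zero_left h3
    rw [hh, dotProduct_neg, show 1+n = n+1 from Nat.add_comm 1 n]
  -- HT3
  have hb : ∀ n ∈ range (K+2),
      μ (n+1) ⬝ᵥ b (n+1) + μ (n+1) ⬝ᵥ (Aminus (n+1) *ᵥ u n)
        + μ (n+1) ⬝ᵥ (A0 (n+1) *ᵥ u (n+1)) + μ (n+1) ⬝ᵥ (Aplus (n+1) *ᵥ u (n+1+1))
        + μ (n+1) ⬝ᵥ (Λ (n+1) *ᵥ v (n+1)) = 0 := by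
    intro n hn
    have h2 := H2 (n+1) (by omega) (by simp only [mem_range] at hn; omega)
    have := congrArg (fun z => μ (n+1) ⬝ᵥ z) h2
    simp only [dotProduct_add, dotProduct_zero, Nat.add_sub_cancel] at this
    linarith
  have HT3 : ∑ n ∈ range (K+3), μ n ⬝ᵥ b n
      = -(μ 0 ⬝ᵥ (A0 0 *ᵥ u 0) + μ 0 ⬝ᵥ (D0 *ᵥ w) + μ 1 ⬝ᵥ (Aminus 1 *ᵥ u 0)
          + SX + SV + SW + SZ) := by
    have hb0 : μ 0 ⬝ᵥ b 0 + μ 0 ⬝ᵥ (A0 0 *ᵥ u 0) + μ 0 ⬝ᵥ (Aplus 0 *ᵥ u 1)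
        + μ 0 ⬝ᵥ (Λ 0 *ᵥ v 0) + μ 0 ⬝ᵥ (D0 *ᵥ w) = 0 := by
      have := congrArg (fun z => μ 0 ⬝ᵥ z) H1
      simp only [dotProduct_add, dotProduct_zero] at this
      linarith
    have e1 : ∑ n ∈ range (K+3), μ n ⬝ᵥ b n
        = (∑ n ∈ range (K+2), μ (n+1) ⬝ᵥ b (n+1)) + μ 0 ⬝ᵥ b 0 :=
      Finset.sum_range_succ' _ (K+2)
    have e2 : ∑ n ∈ range (K+2),
        (μ (n+1) ⬝ᵥ b (n+1) + μ (n+1) ⬝ᵥ (Aminus (n+1) *ᵥ u n)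
          + μ (n+1) ⬝ᵥ (A0 (n+1) *ᵥ u (n+1)) + μ (n+1) ⬝ᵥ (Aplus (n+1) *ᵥ u (n+1+1))
          + μ (n+1) ⬝ᵥ (Λ (n+1) *ᵥ v (n+1))) = 0 := Finset.sum_eq_zero hb
    rw [Finset.sum_add_distrib, Finset.sum_add_distrib, Finset.sum_add_distrib,
      Finset.sum_add_distrib] at e2
    have eM : ∑ n ∈ range (K+2), μ (n+1) ⬝ᵥ (Aminus (n+1) *ᵥ u n)
        = (∑ n ∈ range (K+1), μ (n+1+1) ⬝ᵥ (Aminus (n+1+1) *ᵥ u (n+1)))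
          + μ 1 ⬝ᵥ (Aminus 1 *ᵥ u 0) :=
      Finset.sum_range_succ' _ (K+1)
    have eX : SX = (∑ n ∈ range (K+2), μ (n+1) ⬝ᵥ (Aplus (n+1) *ᵥ u (n+1+1)))
        + μ 0 ⬝ᵥ (Aplus 0 *ᵥ u 1) := Finset.sum_range_succ' _ (K+2)
    have eV : SV = (∑ n ∈ range (K+2), μ (n+1) ⬝ᵥ (Λ (n+1) *ᵥ v (n+1)))
        + μ 0 ⬝ᵥ (Λ 0 *ᵥ v 0) := Finset.sum_range_succ' _ (K+2)
    rw [hSZ, hSW]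
    linarith
  -- HT1
  have hp : ∀ n ∈ range (K+1), p (n+1) ⬝ᵥ u (n+1)
      = μ n ⬝ᵥ (Aplus n *ᵥ u (n+1)) + η (n+1) ⬝ᵥ (G (n+1) *ᵥ u (n+1))
        + μ (n+1+1) ⬝ᵥ (Aminus (n+1+1) *ᵥ u (n+1))
        + μ (n+1) ⬝ᵥ (A0 (n+1) *ᵥ u (n+1)) := by
    intro n hn
    have h3 := A3 (n+1) (by omega) (by simp only [mem_range] at hn; omega)
    have := congrArg (fun z => z ⬝ᵥ u (n+1)) h3
    simp only [Nat.add_sub_cancel, add_dotProduct, sub_dotProduct, tdot] at this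
    linarith
  have hpK1 : p (K+2) ⬝ᵥ u (K+2)
      = μ (K+1) ⬝ᵥ (Aplus (K+1) *ᵥ u (K+2)) + η (K+2) ⬝ᵥ (G (K+2) *ᵥ u (K+2))
        + μ (K+2) ⬝ᵥ (A0 (K+2) *ᵥ u (K+2)) := by
    have := congrArg (fun z => z ⬝ᵥ u (K+2)) A2
    simp only [show K+3-1 = K+2 from rfl, show K+3-2 = K+1 from rfl,
      add_dotProduct, sub_dotProduct, tdot] at this
    linarith
  have hpK2 : p (K+3) ⬝ᵥ u (K+3)
      = μ (K+2) ⬝ᵥ (Aplus (K+2) *ᵥ u (K+3)) + η (K+3) ⬝ᵥ (G (K+3) *ᵥ u (K+3)) := by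
    have := congrArg (fun z => z ⬝ᵥ u (K+3)) A1
    simp only [show K+3-1 = K+2 from rfl, add_dotProduct, tdot] at this
    linarith
  have HT1 : ∑ n ∈ range (K+3+1), p n ⬝ᵥ u n = p 0 ⬝ᵥ u 0 + SX + SY + SZ + SW := by
    have e1 : ∑ n ∈ range (K+3+1), p n ⬝ᵥ u n
        = (∑ n ∈ range (K+3), p (n+1) ⬝ᵥ u (n+1)) + p 0 ⬝ᵥ u 0 :=
      Finset.sum_range_succ' _ (K+3)
    have e2 : ∑ n ∈ range (K+3), p (n+1) ⬝ᵥ u (n+1)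
        = (∑ n ∈ range (K+1), p (n+1) ⬝ᵥ u (n+1)) + p (K+2) ⬝ᵥ u (K+2)
          + p (K+3) ⬝ᵥ u (K+3) := by
      rw [Finset.sum_range_succ (fun n => p (n+1) ⬝ᵥ u (n+1)) (K+2),
        Finset.sum_range_succ (fun n => p (n+1) ⬝ᵥ u (n+1)) (K+1)]
    have e3 : ∑ n ∈ range (K+1), p (n+1) ⬝ᵥ u (n+1)
        = (∑ n ∈ range (K+1), μ n ⬝ᵥ (Aplus n *ᵥ u (n+1)))
          + (∑ n ∈ range (K+1), η (n+1) ⬝ᵥ (G (n+1) *ᵥ u (n+1)))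
          + SZ + (∑ n ∈ range (K+1), μ (n+1) ⬝ᵥ (A0 (n+1) *ᵥ u (n+1))) := by
      rw [hSZ, ← Finset.sum_add_distrib, ← Finset.sum_add_distrib, ← Finset.sum_add_distrib]
      exact Finset.sum_congr rfl hp
    have eX : SX = ((∑ n ∈ range (K+1), μ n ⬝ᵥ (Aplus n *ᵥ u (n+1)))
          + μ (K+1) ⬝ᵥ (Aplus (K+1) *ᵥ u (K+2)))
          + μ (K+2) ⬝ᵥ (Aplus (K+2) *ᵥ u (K+3)) := by
      rw [hSX, Finset.sum_range_succ (fun n => μ n ⬝ᵥ (Aplus n *ᵥ u (n+1))) (K+2),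
        Finset.sum_range_succ (fun n => μ n ⬝ᵥ (Aplus n *ᵥ u (n+1))) (K+1)]
    have eY : SY = ((∑ n ∈ range (K+1), η (n+1) ⬝ᵥ (G (n+1) *ᵥ u (n+1)))
          + η (K+2) ⬝ᵥ (G (K+2) *ᵥ u (K+2)))
          + η (K+3) ⬝ᵥ (G (K+3) *ᵥ u (K+3)) := by
      rw [hSY, Finset.sum_range_succ (fun n => η (n+1) ⬝ᵥ (G (n+1) *ᵥ u (n+1))) (K+2),
        Finset.sum_range_succ (fun n => η (n+1) ⬝ᵥ (G (n+1) *ᵥ u (n+1))) (K+1)]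
    have eW : SW = (∑ n ∈ range (K+1), μ (n+1) ⬝ᵥ (A0 (n+1) *ᵥ u (n+1)))
          + μ (K+2) ⬝ᵥ (A0 (K+2) *ᵥ u (K+2)) := by
      rw [hSW, Finset.sum_range_succ (fun n => μ (n+1) ⬝ᵥ (A0 (n+1) *ᵥ u (n+1))) (K+1)]
    linarith
  -- finish
  rw [sub_dotProduct, sub_dotProduct, sub_dotProduct, tdot, tdot, tdot]
  linarith
end

section
/- Variation of the discrete action (Equation 13): the discrete action S_d is differentiable at every configuration q = (q_0,…,q_N), and for every variation δ = (δ_0,…,δ_N) with δ_0 = 0 and δ_N = 0, its derivative is given by DS_d(q)(δ) = Σ_{n=1}^{N−1} [ D₁L_d(q_n, q_{n+1})(δ_n) + D₂L_d(q_{n−1}, q_n)(δ_n) − λ_n · (Dg(q_n)(δ_n)) ], where D₁L_d and D₂L_d denote the partial Fréchet derivatives of L_d with respect to its first and second arguments and Dg(q_n) is the Fréchet derivative of g at q_n. -/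
open Matrix Finset
open Fin.NatCast

/-!
The action is a chain sum `∑ n < N, Fₙ (qₙ, qₙ₊₁)` of two-point functions, where `Fₙ` is
`L_d` minus the averaged constraint terms. Its derivative along `δ` is
`∑ ∂₁Fₙ (δₙ) + ∂₂Fₙ (δₙ₊₁)`; shifting the index of the second sum and using `δ₀ = δ_N = 0`
to drop the boundary terms collects the coefficient of each interior `δₙ`. The halves
`½ λₙ · Dg(qₙ)` contributed by `Fₙ₋₁` and by `Fₙ` add up to `λₙ · Dg(qₙ)`.
-/

theorem Finset.sum_range_add_eq_sum_Icc {M : Type*} [AddCommMonoid M] {N : ℕ} (hN : 1 ≤ N)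
    (u v : ℕ → M) (hu : u 0 = 0) (hv : v (N - 1) = 0) :
    ∑ n ∈ range N, (u n + v n) = ∑ n ∈ Icc 1 (N - 1), (u n + v (n - 1)) := by
  obtain ⟨K, rfl⟩ := Nat.exists_eq_add_of_le' hN
  rw [Nat.add_sub_cancel] at hv ⊢
  rw [← Ico_add_one_right_eq_Icc, sum_Ico_eq_sum_range, sum_add_distrib, sum_add_distrib,
    sum_range_succ' u, sum_range_succ v, hu, hv]
  simp [add_comm 1]

section Slices

variable {E F G : Type*} [NormedAddCommGroup E] [NormedSpace ℝ E]
  [NormedAddCommGroup F] [NormedSpace ℝ F] [NormedAddCommGroup G] [NormedSpace ℝ G]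

theorem fderiv_comp_prodMk_left_apply {f : E × F → G} {a : E} {b : F}
    (hf : DifferentiableAt ℝ f (a, b)) (x : E) :
    fderiv ℝ (fun x => f (x, b)) a x = fderiv ℝ f (a, b) (x, 0) :=
  have h : HasFDerivAt (fun x => f (x, b)) _ a :=
    hf.hasFDerivAt.comp a (hasFDerivAt_prodMk_left a b)
  congrArg (· x) h.fderiv

theorem fderiv_comp_prodMk_right_apply {f : E × F → G} {a : E} {b : F}
    (hf : DifferentiableAt ℝ f (a, b)) (y : F) :
    fderiv ℝ (fun y => f (a, y)) b y = fderiv ℝ f (a, b) (0, y) :=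
  have h : HasFDerivAt (fun y => f (a, y)) _ b :=
    hf.hasFDerivAt.comp b (hasFDerivAt_prodMk_right a b)
  congrArg (· y) h.fderiv

theorem fderiv_apply_prod_eq_add {f : E × F → G} {a : E} {b : F}
    (hf : DifferentiableAt ℝ f (a, b)) (x : E) (y : F) :
    fderiv ℝ f (a, b) (x, y) =
      fderiv ℝ (fun x => f (x, b)) a x + fderiv ℝ (fun y => f (a, y)) b y := by
  rw [fderiv_comp_prodMk_left_apply hf, fderiv_comp_prodMk_right_apply hf, ← map_add,
    Prod.mk_add_mk, add_zero, zero_add]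

end Slices

section ChainSum

variable {E G : Type*} [NormedAddCommGroup E] [NormedSpace ℝ E]
  [NormedAddCommGroup G] [NormedSpace ℝ G] {N : ℕ}

def chainSum (F : ℕ → E × E → G) (q : Fin (N + 1) → E) : G :=
  ∑ n ∈ range N, F n (q n, q (n + 1))

variable {F : ℕ → E × E → G} {q : Fin (N + 1) → E}

theorem hasFDerivAt_chainSum (hF : ∀ n ∈ range N, DifferentiableAt ℝ (F n) (q n, q (n + 1))) :
    HasFDerivAt (chainSum F)
      (∑ n ∈ range N, (fderiv ℝ (F n) (q n, q (n + 1))).comp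
        ((ContinuousLinearMap.proj (n : Fin (N + 1))).prod
          (ContinuousLinearMap.proj ((n : Fin (N + 1)) + 1)))) q :=
  HasFDerivAt.fun_sum fun n hn =>
    (hF n hn).hasFDerivAt.comp q ((hasFDerivAt_apply _ q).prodMk (hasFDerivAt_apply _ q))

theorem fderiv_chainSum_apply (hF : ∀ n ∈ range N, DifferentiableAt ℝ (F n) (q n, q (n + 1)))
    (δ : Fin (N + 1) → E) :
    fderiv ℝ (chainSum F) q δ = ∑ n ∈ range N,
      (fderiv ℝ (fun x => F n (x, q (n + 1))) (q n) (δ n)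
        + fderiv ℝ (fun y => F n (q n, y)) (q (n + 1)) (δ (n + 1))) := by
  rw [(hasFDerivAt_chainSum hF).fderiv, _root_.sum_apply]
  exact sum_congr rfl fun n hn => fderiv_apply_prod_eq_add (hF n hn) _ _

theorem fderiv_chainSum_apply_of_eq_zero (hN : 1 ≤ N)
    (hF : ∀ n ∈ range N, DifferentiableAt ℝ (F n) (q n, q (n + 1)))
    {δ : Fin (N + 1) → E} (hδ₀ : δ 0 = 0) (hδN : δ N = 0) :
    fderiv ℝ (chainSum F) q δ = ∑ n ∈ Icc 1 (N - 1),
      (fderiv ℝ (fun x => F n (x, q (n + 1))) (q n) (δ n)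
        + fderiv ℝ (fun y => F (n - 1) (q (n - 1), y)) (q n) (δ n)) := by
  have hcast {n : ℕ} (hn : 1 ≤ n) : ((n - 1 : ℕ) : Fin (N + 1)) + 1 = n := by
    rw [← Nat.cast_add_one, Nat.sub_add_cancel hn]
  rw [fderiv_chainSum_apply hF, sum_range_add_eq_sum_Icc hN]
  · refine sum_congr rfl fun n hn => ?_
    have hn : 1 ≤ n := (mem_Icc.mp hn).1
    rw [hcast hn, ← eq_sub_of_add_eq (hcast hn)]
  · rw [Nat.cast_zero, hδ₀, map_zero]
  · rw [hcast hN, hδN, map_zero]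

end ChainSum

theorem HasFDerivAt.const_dotProduct {E ι : Type*} [NormedAddCommGroup E] [NormedSpace ℝ E]
    [Fintype ι] {g : E → ι → ℝ} {g' : E →L[ℝ] ι → ℝ} {x : E}
    (hg : HasFDerivAt g g' x) (w : ι → ℝ) :
    HasFDerivAt (fun x => w ⬝ᵥ g x)
      ((LinearMap.toContinuousLinearMap (dotProductBilin ℝ ℝ w)).comp g') x :=
  (LinearMap.toContinuousLinearMap (dotProductBilin ℝ ℝ w)).hasFDerivAt.comp x hg

section ConstrainedLagrangian

variable {E ι : Type*} [NormedAddCommGroup E] [NormedSpace ℝ E] [Fintype ι]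
  {Ld : E × E → ℝ} {g : E → ι → ℝ} {lam : ℕ → ι → ℝ}

noncomputable def constrainedLagrangian (Ld : E × E → ℝ) (g : E → ι → ℝ) (lam : ℕ → ι → ℝ)
    (n : ℕ) (p : E × E) : ℝ :=
  Ld p - 1 / 2 * (lam n ⬝ᵥ g p.1 + lam (n + 1) ⬝ᵥ g p.2)

theorem differentiable_constrainedLagrangian (hLd : Differentiable ℝ Ld)
    (hg : Differentiable ℝ g) (n : ℕ) :
    Differentiable ℝ (constrainedLagrangian Ld g lam n) := fun p =>
  have h₁ := ((hg p.1).hasFDerivAt.comp p hasFDerivAt_fst).const_dotProduct (lam n)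
  have h₂ := ((hg p.2).hasFDerivAt.comp p hasFDerivAt_snd).const_dotProduct (lam (n + 1))
  hLd.differentiableAt.sub ((h₁.add h₂).differentiableAt.const_mul _)

theorem fderiv_constrainedLagrangian_left_apply {n : ℕ} {a b : E}
    (hLd : DifferentiableAt ℝ Ld (a, b)) (hg : DifferentiableAt ℝ g a) (v : E) :
    fderiv ℝ (fun x => constrainedLagrangian Ld g lam n (x, b)) a v =
      fderiv ℝ (fun x => Ld (x, b)) a v - 1 / 2 * lam n ⬝ᵥ fderiv ℝ g a v := by
  have hL : DifferentiableAt ℝ (fun x => Ld (x, b)) a :=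
    hLd.comp a (differentiableAt_id.prodMk (differentiableAt_const b))
  have h : HasFDerivAt (fun x => constrainedLagrangian Ld g lam n (x, b)) _ a :=
    hL.hasFDerivAt.fun_sub
      (((hg.hasFDerivAt.const_dotProduct (lam n)).add_const (lam (n + 1) ⬝ᵥ g b)).const_mul
        (1 / 2))
  rw [h.fderiv]
  simp

theorem fderiv_constrainedLagrangian_right_apply {n : ℕ} {a b : E}
    (hLd : DifferentiableAt ℝ Ld (a, b)) (hg : DifferentiableAt ℝ g b) (v : E) :
    fderiv ℝ (fun y => constrainedLagrangian Ld g lam n (a, y)) b v =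
      fderiv ℝ (fun y => Ld (a, y)) b v - 1 / 2 * lam (n + 1) ⬝ᵥ fderiv ℝ g b v := by
  have hL : DifferentiableAt ℝ (fun y => Ld (a, y)) b :=
    hLd.comp b ((differentiableAt_const a).prodMk differentiableAt_id)
  have h : HasFDerivAt (fun y => constrainedLagrangian Ld g lam n (a, y)) _ b :=
    hL.hasFDerivAt.fun_sub
      (((hg.hasFDerivAt.const_dotProduct (lam (n + 1))).const_add (lam n ⬝ᵥ g a)).const_mul
        (1 / 2))
  rw [h.fderiv]
  simp

end ConstrainedLagrangian

/-- Variation of the discrete action (Equation 13): the discrete action `Sd` is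
differentiable at every configuration, and for every variation vanishing at the
endpoints its derivative is the interior sum of partial derivatives of the discrete
Lagrangian minus the multiplier terms. -/
theorem discrete_action_variation (m l N : ℕ) (hN : 2 ≤ N)
    (Ld : (Fin m → ℝ) × (Fin m → ℝ) → ℝ) (hLd : Differentiable ℝ Ld)
    (g : (Fin m → ℝ) → (Fin l → ℝ)) (hg : Differentiable ℝ g)
    (lam : ℕ → Fin l → ℝ)
    (Sd : (Fin (N + 1) → Fin m → ℝ) → ℝ)
    (hSd : Sd = fun q => ∑ n ∈ range N,
      (Ld (q n, q (n + 1))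
        - (1 / 2) * (lam n ⬝ᵥ g (q n) + lam (n + 1) ⬝ᵥ g (q (n + 1)))))
    (q : Fin (N + 1) → Fin m → ℝ) :
    DifferentiableAt ℝ Sd q ∧
    ∀ δ : Fin (N + 1) → Fin m → ℝ, δ 0 = 0 → δ (N : Fin (N + 1)) = 0 →
      fderiv ℝ Sd q δ = ∑ n ∈ Icc 1 (N - 1),
        (fderiv ℝ (fun x => Ld (x, q (n + 1))) (q n) (δ n)
          + fderiv ℝ (fun y => Ld (q (n - 1), y)) (q n) (δ n)
          - lam n ⬝ᵥ fderiv ℝ g (q n) (δ n)) := by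
  have hF n := differentiable_constrainedLagrangian (lam := lam) hLd hg n
  obtain rfl : Sd = chainSum (constrainedLagrangian Ld g lam) := hSd
  refine ⟨(hasFDerivAt_chainSum fun n _ => hF n _).differentiableAt, fun δ hδ₀ hδN => ?_⟩
  rw [fderiv_chainSum_apply_of_eq_zero (by omega) (fun n _ => hF n _) hδ₀ hδN]
  refine sum_congr rfl fun n hn => ?_
  rw [fderiv_constrainedLagrangian_left_apply (hLd _) (hg _),
    fderiv_constrainedLagrangian_right_apply (hLd _) (hg _), Nat.sub_add_cancel (mem_Icc.mp hn).1]
  ring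
end
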